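/- arXiv:2205.13704 — 3 statements merged into one kernel-verified Lean document; each statement's English description precedes it below -/
import Mathlib

section
/- A finite directed multigraph G has no intersecting cycles if and only if for every strongly connected component C of G that contains at least one edge (where a strongly connected component is an equivalence class of vertices under mutual reachability, together with all edges of G having both endpoints in the class), the edges of C constitute exactly one simple cycle passing exactly once through each vertex of C. -/
open Filter Topology

variable {V E : Type*}

/-- A nonempty list of edges forms a directed path:
the target of each edge is the source of the next. -/
def IsDiPath (src tgt : E → V) (l : List E) : Prop :=
  l ≠ [] ∧ l.Chain' (fun e f => tgt e = src f)

/-- The path `l` starts at the vertex `v` (the source of its first edge is `v`). -/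
def StartsAt (src : E → V) (l : List E) (v : V) : Prop :=
  l.head?.map src = some v

/-- The path `l` ends at the vertex `w` (the target of its last edge is `w`). -/
def EndsAt (tgt : E → V) (l : List E) (w : V) : Prop :=
  l.getLast?.map tgt = some w

/-- `l` is a closed path: a path such that the target of the last edge
equals the source of the first edge. -/
def IsClosedDiPath (src tgt : E → V) (l : List E) : Prop :=
  IsDiPath src tgt l ∧ ∃ v : V, StartsAt src l v ∧ EndsAt tgt l v

/-- `l` is a simple cycle: a closed path whose edge sources are pairwise distinct. -/
def IsSimpleCycle (src tgt : E → V) (l : List E) : Prop :=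
  IsClosedDiPath src tgt l ∧ (l.map src).Nodup

/-- The vertex `v` lies on the cycle `l`, i.e. it is the source of one of its edges. -/
def OnCycle (src : E → V) (l : List E) (v : V) : Prop :=
  v ∈ l.map src

/-- Two simple cycles are distinct if neither is a cyclic rotation of the other;
the graph has no intersecting cycles if any two distinct simple cycles are
vertex-disjoint. -/
def NoIntersectingCycles (src tgt : E → V) : Prop :=
  ∀ l l' : List E, IsSimpleCycle src tgt l → IsSimpleCycle src tgt l' →
    ¬ l.IsRotated l' → ∀ v : V, ¬ (OnCycle src l v ∧ OnCycle src l' v)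

/-- `v ≥ w`: either `v = w` or there is a directed path from `v` to `w`. -/
def Reaches (src tgt : E → V) (v w : V) : Prop :=
  v = w ∨ ∃ l : List E, IsDiPath src tgt l ∧ StartsAt src l v ∧ EndsAt tgt l w

/-- `v` and `w` are mutually reachable. -/
def MutReach (src tgt : E → V) (v w : V) : Prop :=
  Reaches src tgt v w ∧ Reaches src tgt w v

/-- The number of directed paths of length `n` in the graph starting at `v`. -/
noncomputable def pathCount (src tgt : E → V) (v : V) (n : ℕ) : ℕ :=
  Nat.card {l : List E // l.length = n ∧ IsDiPath src tgt l ∧ StartsAt src l v}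

/-- An infinite path in the graph. -/
def IsInfPath (src tgt : E → V) (p : ℕ → E) : Prop :=
  ∀ n : ℕ, tgt (p n) = src (p (n + 1))

/-- The vertex `v` is visited infinitely often by the infinite path `p`. -/
def VisitedInfOften (src : E → V) (p : ℕ → E) (v : V) : Prop :=
  ∀ N : ℕ, ∃ n ≥ N, src (p n) = v

/-- `v ≥ C`: the vertex `v` reaches some vertex on the cycle `C`. -/
def ReachesCycle (src tgt : E → V) (v : V) (l : List E) : Prop :=
  ∃ w : V, OnCycle src l w ∧ Reaches src tgt v w

/-- `C ≥ C'`: some vertex on the cycle `C` reaches the cycle `C'`. -/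
def CycleReachesCycle (src tgt : E → V) (l l' : List E) : Prop :=
  ∃ v : V, OnCycle src l v ∧ ReachesCycle src tgt v l'

/-- Two cycles are vertex-disjoint. -/
def CyclesDisjoint (src : E → V) (l l' : List E) : Prop :=
  ∀ v : V, ¬ (OnCycle src l v ∧ OnCycle src l' v)

/-- The vertex `v` lies on two distinct simple cycles. -/
def OnTwoCycles (src tgt : E → V) (v : V) : Prop :=
  ∃ l l' : List E, IsSimpleCycle src tgt l ∧ IsSimpleCycle src tgt l' ∧
    ¬ l.IsRotated l' ∧ OnCycle src l v ∧ OnCycle src l' v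

/-- The adjacency matrix of the graph, as a real matrix: the `(a, b)` entry is the
number of edges from `a` to `b`. -/
noncomputable def adjMatrix (src tgt : E → V) : Matrix V V ℝ :=
  Matrix.of fun a b => (Nat.card {e : E // src e = a ∧ tgt e = b} : ℝ)

/-
If no two distinct simple cycles meet, every closed walk lies in a single simple cycle: split it
at a repeated vertex into two shorter closed walks through a common vertex; the simple cycles
containing them meet, hence coincide. So the simple cycles containing closed walks through a
vertex `v` are all one cycle, and it carries every edge of the component of `v`. Conversely, a
simple cycle through `v` only uses edges of the component of `v`, and a simple cycle whose edges
lie in another simple cycle is a rotation of it: cut both at a common edge, and a walk with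
distinct vertices that only uses edges of a path with the same endpoints is that path.
-/

theorem exists_eq_append_of_not_nodup_map {α β : Type*} {g : α → β} {l : List α}
    (h : ¬ (l.map g).Nodup) :
    ∃ l₁ e l₂ f l₃, l = l₁ ++ e :: l₂ ++ f :: l₃ ∧ g e = g f := by
  induction l with
  | nil => simp at h
  | cons e l ih =>
    rw [List.map_cons, List.nodup_cons, not_and_or, not_not] at h
    rcases h with he | hl
    · obtain ⟨f, hf, hef⟩ := List.mem_map.1 he
      obtain ⟨l₂, l₃, rfl⟩ := List.append_of_mem hf
      exact ⟨[], e, l₂, f, l₃, rfl, hef.symm⟩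
    · obtain ⟨l₁, e', l₂, f, l₃, rfl, hef⟩ := ih hl
      exact ⟨e :: l₁, e', l₂, f, l₃, rfl, hef⟩

section

variable (src tgt : E → V)

inductive IsWalk : V → V → List E → Prop
  | nil (v : V) : IsWalk v v []
  | cons (e : E) {w : V} {l : List E} : IsWalk (tgt e) w l → IsWalk (src e) w (e :: l)

variable {src tgt}

@[simp]
theorem isWalk_nil_iff {u w : V} : IsWalk src tgt u w [] ↔ u = w :=
  ⟨by rintro ⟨⟩; rfl, by rintro rfl; exact .nil u⟩

@[simp]
theorem isWalk_cons_iff {u w : V} {e : E} {l : List E} :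
    IsWalk src tgt u w (e :: l) ↔ src e = u ∧ IsWalk src tgt (tgt e) w l :=
  ⟨by rintro ⟨⟩; exact ⟨rfl, ‹_›⟩, by rintro ⟨rfl, h⟩; exact .cons e h⟩

theorem isWalk_append_iff {u w : V} {l₁ l₂ : List E} :
    IsWalk src tgt u w (l₁ ++ l₂) ↔ ∃ x, IsWalk src tgt u x l₁ ∧ IsWalk src tgt x w l₂ := by
  induction l₁ generalizing u with
  | nil => simp
  | cons e l ih => simp [ih, and_assoc, exists_and_left]

theorem IsWalk.append {u x w : V} {l₁ l₂ : List E} (h₁ : IsWalk src tgt u x l₁)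
    (h₂ : IsWalk src tgt x w l₂) : IsWalk src tgt u w (l₁ ++ l₂) :=
  isWalk_append_iff.2 ⟨x, h₁, h₂⟩

theorem IsWalk.mem_map_src {u w : V} {l : List E} (h : IsWalk src tgt u w l) (hl : l ≠ []) :
    u ∈ l.map src := by
  obtain ⟨e, l, rfl⟩ := List.exists_cons_of_ne_nil hl
  simp [(isWalk_cons_iff.1 h).1]

theorem isDiPath_iff {l : List E} :
    IsDiPath src tgt l ↔ l ≠ [] ∧ l.IsChain (fun e f => tgt e = src f) :=
  Iff.rfl

theorem isWalk_iff_isDiPath {u w : V} {l : List E} (hl : l ≠ []) :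
    IsWalk src tgt u w l ↔ IsDiPath src tgt l ∧ StartsAt src l u ∧ EndsAt tgt l w := by
  induction l generalizing u with
  | nil => exact absurd rfl hl
  | cons e l ih =>
    rcases l with _ | ⟨f, l⟩
    · simp [isDiPath_iff, StartsAt, EndsAt]
    · simp only [isWalk_cons_iff, ih (List.cons_ne_nil f l), isDiPath_iff, StartsAt, EndsAt,
        List.isChain_cons_cons, List.head?_cons, List.getLast?_cons_cons, Option.map_some,
        Option.some.injEq]
      grind

theorem reaches_iff_exists_isWalk {v w : V} :
    Reaches src tgt v w ↔ ∃ l, IsWalk src tgt v w l := by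
  constructor
  · rintro (rfl | ⟨l, hl⟩)
    · exact ⟨[], .nil v⟩
    · exact ⟨l, (isWalk_iff_isDiPath hl.1.1).2 hl⟩
  · rintro ⟨_ | ⟨e, l⟩, h⟩
    · exact .inl (isWalk_nil_iff.1 h)
    · exact .inr ⟨_, (isWalk_iff_isDiPath (List.cons_ne_nil e l)).1 h⟩

theorem isSimpleCycle_iff {l : List E} :
    IsSimpleCycle src tgt l ↔ l ≠ [] ∧ (∃ u, IsWalk src tgt u u l) ∧ (l.map src).Nodup := by
  constructor
  · rintro ⟨⟨hp, u, hu⟩, hnd⟩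
    exact ⟨hp.1, ⟨u, (isWalk_iff_isDiPath hp.1).2 ⟨hp, hu⟩⟩, hnd⟩
  · rintro ⟨hl, ⟨u, hu⟩, hnd⟩
    obtain ⟨hp, hu⟩ := (isWalk_iff_isDiPath hl).1 hu
    exact ⟨⟨hp, u, hu⟩, hnd⟩

theorem Reaches.trans {u v w : V} (h₁ : Reaches src tgt u v) (h₂ : Reaches src tgt v w) :
    Reaches src tgt u w := by
  obtain ⟨l₁, h₁⟩ := reaches_iff_exists_isWalk.1 h₁
  obtain ⟨l₂, h₂⟩ := reaches_iff_exists_isWalk.1 h₂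
  exact reaches_iff_exists_isWalk.2 ⟨_, h₁.append h₂⟩

theorem MutReach.symm {v w : V} (h : MutReach src tgt v w) : MutReach src tgt w v :=
  ⟨h.2, h.1⟩

theorem MutReach.trans {u v w : V} (h₁ : MutReach src tgt u v) (h₂ : MutReach src tgt v w) :
    MutReach src tgt u w :=
  ⟨h₁.1.trans h₂.1, h₂.2.trans h₁.2⟩

theorem IsWalk.mutReach_of_mem {u : V} {l : List E} (h : IsWalk src tgt u u l) {f : E}
    (hf : f ∈ l) : MutReach src tgt (src f) u ∧ MutReach src tgt (tgt f) u := by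
  obtain ⟨l₁, l₂, rfl⟩ := List.append_of_mem hf
  obtain ⟨x, h₁, h₂⟩ := isWalk_append_iff.1 h
  obtain ⟨rfl, h₃⟩ := isWalk_cons_iff.1 h₂
  have h₁' : IsWalk src tgt u (tgt f) (l₁ ++ [f]) := h₁.append (.cons f (.nil _))
  simp only [MutReach, reaches_iff_exists_isWalk]
  exact ⟨⟨⟨_, h₂⟩, ⟨_, h₁⟩⟩, ⟨⟨_, h₃⟩, ⟨_, h₁'⟩⟩⟩

theorem IsSimpleCycle.mutReach_of_mem {l : List E} (hl : IsSimpleCycle src tgt l) {v : V}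
    (hv : OnCycle src l v) {f : E} (hf : f ∈ l) :
    MutReach src tgt (src f) v ∧ MutReach src tgt (tgt f) v := by
  obtain ⟨-, ⟨u, hu⟩, -⟩ := isSimpleCycle_iff.1 hl
  obtain ⟨g, hg, rfl⟩ := List.mem_map.1 hv
  have hvu := (hu.mutReach_of_mem hg).1.symm
  obtain ⟨hsrc, htgt⟩ := hu.mutReach_of_mem hf
  exact ⟨hsrc.trans hvu, htgt.trans hvu⟩

theorem IsWalk.eq_of_subset {u w : V} {l P : List E} (hl : IsWalk src tgt u w l)
    (hP : IsWalk src tgt u w P) (hl_nodup : (l.map src).Nodup) (hP_nodup : (P.map src).Nodup)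
    (hw : w ∉ P.map src) (hsub : l ⊆ P) : l = P := by
  induction hl generalizing P with
  | nil u =>
    rcases P with _ | ⟨g, P⟩
    · rfl
    · exact absurd (hP.mem_map_src (List.cons_ne_nil g P)) hw
  | cons f hl ih =>
    rcases P with _ | ⟨g, P⟩
    · exact absurd (hsub List.mem_cons_self) List.not_mem_nil
    obtain ⟨hg, hP⟩ := isWalk_cons_iff.1 hP
    rw [List.map_cons, List.nodup_cons] at hl_nodup hP_nodup
    have hfg : f = g := by
      rcases List.mem_cons.1 (hsub List.mem_cons_self) with hfg | hfP
      · exact hfg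
      · exact absurd (hg ▸ List.mem_map_of_mem hfP) hP_nodup.1
    subst hfg
    refine congrArg _ (ih hP hl_nodup.2 hP_nodup.2 (hw ∘ List.mem_cons_of_mem _) ?_)
    intro h hh
    rcases List.mem_cons.1 (hsub (List.mem_cons_of_mem f hh)) with rfl | hhP
    · exact absurd (List.mem_map_of_mem hh) hl_nodup.1
    · exact hhP

theorem IsSimpleCycle.isRotated_of_subset {l L : List E} (hl : IsSimpleCycle src tgt l)
    (hL : IsSimpleCycle src tgt L) (hsub : l ⊆ L) : l ~r L := by
  obtain ⟨hne, ⟨x, hl⟩, hl_nodup⟩ := isSimpleCycle_iff.1 hl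
  obtain ⟨-, ⟨u, hL⟩, hL_nodup⟩ := isSimpleCycle_iff.1 hL
  obtain ⟨e, l, rfl⟩ := List.exists_cons_of_ne_nil hne
  obtain ⟨rfl, hl⟩ := isWalk_cons_iff.1 hl
  obtain ⟨L₁, L₂, rfl⟩ := List.append_of_mem (hsub List.mem_cons_self)
  obtain ⟨y, hL₁, hL₂⟩ := isWalk_append_iff.1 hL
  rw [isWalk_cons_iff] at hL₂
  obtain ⟨rfl, hL₂⟩ := hL₂
  rw [List.map_cons, List.nodup_cons] at hl_nodup
  have hperm : ((L₁ ++ e :: L₂).map src).Perm (src e :: (L₂ ++ L₁).map src) := by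
    simpa only [List.map_append, List.map_cons] using
      List.perm_middle.trans (List.perm_append_comm.cons _)
  obtain ⟨he, hP_nodup⟩ := List.nodup_cons.1 (hperm.nodup_iff.1 hL_nodup)
  have hsub' : l ⊆ L₂ ++ L₁ := by
    intro h hh
    have : h ≠ e := by rintro rfl; exact hl_nodup.1 (List.mem_map_of_mem hh)
    simpa [this, or_comm] using hsub (List.mem_cons_of_mem e hh)
  rw [hl.eq_of_subset (hL₂.append hL₁) hl_nodup.2 hP_nodup he hsub']
  exact (List.isRotated_append (l := L₁) (l' := e :: L₂)).symm

theorem NoIntersectingCycles.isRotated (nic : NoIntersectingCycles src tgt) {C₁ C₂ : List E}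
    (h₁ : IsSimpleCycle src tgt C₁) (h₂ : IsSimpleCycle src tgt C₂) {x : V}
    (hx₁ : OnCycle src C₁ x) (hx₂ : OnCycle src C₂ x) : C₁ ~r C₂ :=
  by_contra fun hr => nic C₁ C₂ h₁ h₂ hr x ⟨hx₁, hx₂⟩

theorem NoIntersectingCycles.exists_isSimpleCycle_superset (nic : NoIntersectingCycles src tgt)
    {u : V} {l : List E} (hl : IsWalk src tgt u u l) (hne : l ≠ []) :
    ∃ C, IsSimpleCycle src tgt C ∧ l ⊆ C := by
  by_cases hnd : (l.map src).Nodup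
  · exact ⟨l, isSimpleCycle_iff.2 ⟨hne, ⟨u, hl⟩, hnd⟩, List.Subset.refl l⟩
  obtain ⟨l₁, e, l₂, f, l₃, rfl, hef⟩ := exists_eq_append_of_not_nodup_map hnd
  obtain ⟨x, hl₁₂, hl₃⟩ := isWalk_append_iff.1 hl
  obtain ⟨y, hl₁, hl₂⟩ := isWalk_append_iff.1 hl₁₂
  obtain rfl : src f = x := (isWalk_cons_iff.1 hl₃).1
  obtain rfl : src e = y := (isWalk_cons_iff.1 hl₂).1
  have hM : IsWalk src tgt (src e) (src e) (e :: l₂) := hef ▸ hl₂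
  have hP : IsWalk src tgt u u (l₁ ++ f :: l₃) := (hef ▸ hl₁).append hl₃
  obtain ⟨C₁, hC₁, hPC₁⟩ := nic.exists_isSimpleCycle_superset hP (by simp)
  obtain ⟨C₂, hC₂, hMC₂⟩ := nic.exists_isSimpleCycle_superset hM (List.cons_ne_nil e l₂)
  have hrot : C₂ ~r C₁ := nic.isRotated hC₂ hC₁
    (List.mem_map_of_mem (hMC₂ List.mem_cons_self))
    (hef ▸ List.mem_map_of_mem (hPC₁ (by simp)))
  have hMC₁ : e :: l₂ ⊆ C₁ := fun g hg => hrot.mem_iff.1 (hMC₂ hg)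
  refine ⟨C₁, hC₁, ?_⟩
  simp only [List.append_subset, List.cons_subset] at hPC₁ hMC₁ ⊢
  exact ⟨⟨hPC₁.1, hMC₁⟩, hPC₁.2⟩
termination_by l.length
decreasing_by all_goals subst_vars; simp only [List.length_append, List.length_cons]; omega

theorem NoIntersectingCycles.exists_isSimpleCycle_mem (nic : NoIntersectingCycles src tgt)
    {v : V} {f : E} (h₁ : Reaches src tgt v (src f)) (h₂ : Reaches src tgt (tgt f) v) :
    ∃ C, IsSimpleCycle src tgt C ∧ f ∈ C ∧ OnCycle src C v := by
  obtain ⟨p₁, hp₁⟩ := reaches_iff_exists_isWalk.1 h₁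
  obtain ⟨p₂, hp₂⟩ := reaches_iff_exists_isWalk.1 h₂
  have hW : IsWalk src tgt v v (p₁ ++ f :: p₂) := hp₁.append (.cons f hp₂)
  have hne : p₁ ++ f :: p₂ ≠ [] := by simp
  obtain ⟨C, hC, hWC⟩ := nic.exists_isSimpleCycle_superset hW hne
  exact ⟨C, hC, hWC (by simp), List.map_subset src hWC (hW.mem_map_src hne)⟩

theorem MutReach.exists_edge {v w : V} (h : MutReach src tgt w v) (hne : w ≠ v) :
    ∃ f, src f = w ∧ MutReach src tgt (src f) v ∧ MutReach src tgt (tgt f) v := by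
  obtain ⟨_ | ⟨f, q⟩, hq⟩ := reaches_iff_exists_isWalk.1 h.1
  · exact absurd (isWalk_nil_iff.1 hq) hne
  rw [isWalk_cons_iff] at hq
  obtain ⟨rfl, hq⟩ := hq
  have hf : Reaches src tgt (src f) (tgt f) :=
    reaches_iff_exists_isWalk.2 ⟨[f], .cons f (.nil _)⟩
  exact ⟨f, rfl, h, reaches_iff_exists_isWalk.2 ⟨q, hq⟩, h.2.trans hf⟩

end

theorem noIntersectingCycles_iff_scc_cyclic_general (src tgt : E → V) :
    NoIntersectingCycles src tgt ↔
      ∀ v : V, (∃ e : E, MutReach src tgt (src e) v ∧ MutReach src tgt (tgt e) v) →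
        ∃ l : List E, IsSimpleCycle src tgt l ∧ l.Nodup ∧
          (∀ e : E, e ∈ l ↔ (MutReach src tgt (src e) v ∧ MutReach src tgt (tgt e) v)) ∧
          (∀ w : V, OnCycle src l w ↔ MutReach src tgt w v) := by
  constructor
  · rintro nic v ⟨e, he⟩
    obtain ⟨L, hL, -, hvL⟩ := nic.exists_isSimpleCycle_mem he.1.2 he.2.1
    have hedge : ∀ f, f ∈ L ↔ MutReach src tgt (src f) v ∧ MutReach src tgt (tgt f) v := by
      refine fun f => ⟨hL.mutReach_of_mem hvL, fun hf => ?_⟩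
      obtain ⟨C, hC, hfC, hvC⟩ := nic.exists_isSimpleCycle_mem hf.1.2 hf.2.1
      exact (nic.isRotated hC hL hvC hvL).mem_iff.1 hfC
    refine ⟨L, hL, hL.2.of_map src, hedge, fun w => ⟨?_, fun hw => ?_⟩⟩
    · intro hw
      obtain ⟨f, hf, rfl⟩ := List.mem_map.1 hw
      exact ((hedge f).1 hf).1
    · rcases eq_or_ne w v with rfl | hne
      · exact hvL
      obtain ⟨f, rfl, hf⟩ := hw.exists_edge hne
      exact List.mem_map_of_mem ((hedge f).2 hf)
  · rintro H l l' hl hl' hrot v ⟨hvl, hvl'⟩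
    obtain ⟨e, he⟩ := List.exists_mem_of_ne_nil l (isSimpleCycle_iff.1 hl).1
    obtain ⟨L, hL, -, hLe, -⟩ := H v ⟨e, hl.mutReach_of_mem hvl he⟩
    have hrotL : ∀ {C}, IsSimpleCycle src tgt C → OnCycle src C v → C ~r L := fun hC hvC =>
      hC.isRotated_of_subset hL fun f hf => (hLe f).2 (hC.mutReach_of_mem hvC hf)
    exact hrot ((hrotL hl hvl).trans (hrotL hl' hvl').symm)

/-- A finite directed multigraph has no intersecting cycles if and only
if, for every strongly connected component containing at least one edge, the edges of
the component constitute exactly one simple cycle passing exactly once through each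
vertex of the component. -/
theorem noIntersectingCycles_iff_scc_cyclic [Fintype V] [Fintype E] (src tgt : E → V) :
    NoIntersectingCycles src tgt ↔
      ∀ v : V, (∃ e : E, MutReach src tgt (src e) v ∧ MutReach src tgt (tgt e) v) →
        ∃ l : List E, IsSimpleCycle src tgt l ∧ l.Nodup ∧
          (∀ e : E, e ∈ l ↔ (MutReach src tgt (src e) v ∧ MutReach src tgt (tgt e) v)) ∧
          (∀ w : V, OnCycle src l w ↔ MutReach src tgt w v) :=
  noIntersectingCycles_iff_scc_cyclic_general src tgt
end

section
/- If a finite directed multigraph G has no intersecting cycles, then every infinite path p in G is eventually periodic: there exist N ∈ ℕ and q ≥ 1 such that p(n + q) = p(n) for all n ≥ N. -/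
open Filter Topology

variable {V E : Type*}

/-!
Through any vertex `u` passes at most one simple cycle up to rotation, and its edges have
pairwise distinct sources, so at most one edge out of `u` lies on a simple cycle. Every closed
walk becomes a simple cycle through its first edge once the segments between repeated vertices
are cut out, hence at most one edge out of `u` lies on a closed walk at all. An infinite path
eventually uses only edges it revisits, each of which lies on a closed walk, so from then on
`p (n + 1)` is determined by `p n`; a sequence in the finite set `E` with this property is
eventually periodic.
-/

section Graph

variable {src tgt : E → V} {f : ℕ → E} {n : ℕ}

/-- `f 0, …, f (n - 1)` is a closed walk; the values of `f` from `n` on play no role. -/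
structure IsClosedWalk (src tgt : E → V) (f : ℕ → E) (n : ℕ) : Prop where
  pos : 0 < n
  chain : ∀ k, k + 1 < n → tgt (f k) = src (f (k + 1))
  closed : tgt (f (n - 1)) = src (f 0)

theorem IsClosedWalk.isSimpleCycle_ofFn (hf : IsClosedWalk src tgt f n)
    (hinj : ∀ a b, a < b → b < n → src (f a) ≠ src (f b)) :
    IsSimpleCycle src tgt (List.ofFn fun k : Fin n => f k) := by
  have hn := hf.pos
  refine ⟨⟨⟨?_, ?_⟩, src (f 0), ?_, ?_⟩, ?_⟩
  · exact List.ne_nil_of_length_pos (by simpa using hn)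
  · refine List.isChain_iff_getElem.mpr fun i hi => ?_
    simp only [List.getElem_ofFn]
    exact hf.chain i (by simpa using hi)
  · simp [StartsAt, List.head?_eq_getElem?, hn]
  · simp [EndsAt, List.getLast?_eq_getElem?, hn, hf.closed]
  · rw [List.map_ofFn, List.nodup_ofFn]
    intro a b hab
    by_contra hne
    rcases Fin.lt_or_lt_of_ne hne with h | h
    · exact hinj a b h b.isLt hab
    · exact hinj b a h a.isLt hab.symm

theorem IsClosedWalk.truncate (hf : IsClosedWalk src tgt f n) {b : ℕ} (hb : 0 < b) (hbn : b < n)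
    (h : src (f b) = src (f 0)) : IsClosedWalk src tgt f b :=
  ⟨hb, fun k hk => hf.chain k (by omega), by
    rw [hf.chain (b - 1) (by omega), Nat.sub_add_cancel hb, h]⟩

theorem IsClosedWalk.excise (hf : IsClosedWalk src tgt f n) {a b : ℕ} (ha : 0 < a) (hab : a < b)
    (hbn : b < n) (h : src (f a) = src (f b)) :
    IsClosedWalk src tgt (fun k => if k < a then f k else f (k + (b - a))) (n - (b - a)) := by
  refine ⟨by omega, fun k hk => ?_, ?_⟩
  · rcases Nat.lt_trichotomy (k + 1) a with hk' | hk' | hk'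
    · simpa [show k < a by omega, hk'] using hf.chain k (by omega)
    · simpa [show k < a by omega, hk', Nat.add_sub_cancel' hab.le, h.symm]
        using hf.chain k (by omega)
    · simpa [show ¬ k < a by omega, show ¬ k + 1 < a by omega,
        show k + 1 + (b - a) = k + (b - a) + 1 by omega] using hf.chain (k + (b - a)) (by omega)
  · simpa [show ¬ n - (b - a) - 1 < a by omega, ha,
      show n - (b - a) - 1 + (b - a) = n - 1 by omega] using hf.closed

theorem IsClosedWalk.exists_isSimpleCycle_mem (hf : IsClosedWalk src tgt f n) :
    ∃ C, IsSimpleCycle src tgt C ∧ f 0 ∈ C := by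
  induction n using Nat.strong_induction_on generalizing f with
  | _ n ih =>
  by_cases hinj : ∀ a b, a < b → b < n → src (f a) ≠ src (f b)
  · exact ⟨_, hf.isSimpleCycle_ofFn hinj, List.mem_ofFn.mpr ⟨⟨0, hf.pos⟩, rfl⟩⟩
  push Not at hinj
  obtain ⟨a, b, hab, hbn, hsrc⟩ := hinj
  rcases Nat.eq_zero_or_pos a with rfl | ha
  · exact ih b hbn (hf.truncate (by omega) hbn hsrc.symm)
  · simpa [ha] using ih _ (by omega) (hf.excise ha hab hbn hsrc)

theorem NoIntersectingCycles.eq_of_mem_of_src_eq (hG : NoIntersectingCycles src tgt)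
    {C C' : List E} (hC : IsSimpleCycle src tgt C) (hC' : IsSimpleCycle src tgt C')
    {e e' : E} (he : e ∈ C) (he' : e' ∈ C') (h : src e = src e') : e = e' := by
  have hrot : C ~r C' := by
    by_contra hne
    exact hG C C' hC hC' hne (src e) ⟨List.mem_map_of_mem he, h ▸ List.mem_map_of_mem he'⟩
  exact List.inj_on_of_nodup_map hC'.2 (hrot.mem_iff.mp he) he' h

theorem NoIntersectingCycles.eq_of_isClosedWalk (hG : NoIntersectingCycles src tgt)
    {g : ℕ → E} {m : ℕ} (hf : IsClosedWalk src tgt f n) (hg : IsClosedWalk src tgt g m)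
    (h : src (f 0) = src (g 0)) : f 0 = g 0 := by
  obtain ⟨C, hC, hfC⟩ := hf.exists_isSimpleCycle_mem
  obtain ⟨C', hC', hgC'⟩ := hg.exists_isSimpleCycle_mem
  exact hG.eq_of_mem_of_src_eq hC hC' hfC hgC' h

theorem IsInfPath.isClosedWalk {p : ℕ → E} (hp : IsInfPath src tgt p)
    {a b : ℕ} (hab : a < b) (h : p b = p a) : IsClosedWalk src tgt (fun k => p (a + k)) (b - a) :=
  ⟨by omega, fun k _ => hp (a + k), by
    simpa [show a + (b - a - 1) + 1 = b by omega, h] using hp (a + (b - a - 1))⟩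

end Graph

theorem eventually_exists_gt_apply_eq {α : Type*} [Finite α] (u : ℕ → α) :
    ∀ᶠ n in atTop, ∃ m > n, u m = u n := by
  have : ∀ x, ∀ᶠ n in atTop, u n = x → ∃ m > n, u m = x := by
    intro x
    rcases (u ⁻¹' {x}).finite_or_infinite with hfin | hinf
    · filter_upwards [hfin.eventually_cofinite_notMem.filter_mono Nat.cofinite_eq_atTop.ge]
        with n hn hnx using absurd hnx hn
    · exact Eventually.of_forall fun n _ =>
        let ⟨m, hm, hnm⟩ := hinf.exists_gt n
        ⟨m, hnm, hm⟩
  filter_upwards [eventually_all.mpr this] with n hn using hn (u n) rfl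

theorem exists_periodic_of_apply_eq_imp_succ {α : Type*} [Finite α] (u : ℕ → α) (N : ℕ)
    (h : ∀ a ≥ N, ∀ b ≥ N, u a = u b → u (a + 1) = u (b + 1)) :
    ∃ M q, 1 ≤ q ∧ ∀ n ≥ M, u (n + q) = u n := by
  obtain ⟨i, j, hij, hu⟩ := Set.finite_univ.exists_lt_map_eq_of_forall_mem
    (f := fun k => u (N + k)) fun _ => Set.mem_univ _
  refine ⟨N + i, j - i, by omega, fun n hn => ?_⟩
  induction n, hn using Nat.le_induction with
  | base => rw [show N + i + (j - i) = N + j by omega]; exact hu.symm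
  | succ n hn ih =>
    rw [show n + 1 + (j - i) = n + (j - i) + 1 by omega]
    exact h _ (by omega) _ (by omega) ih

theorem infPath_eventually_periodic_general [Fintype E] (src tgt : E → V)
    (hG : NoIntersectingCycles src tgt) (p : ℕ → E) (hp : IsInfPath src tgt p) :
    ∃ (N q : ℕ), 1 ≤ q ∧ ∀ n ≥ N, p (n + q) = p n := by
  obtain ⟨N, hN⟩ := (eventually_exists_gt_apply_eq p).exists_forall_of_atTop
  refine exists_periodic_of_apply_eq_imp_succ p N fun a ha b hb hab => ?_
  obtain ⟨a', ha', hpa⟩ := hN (a + 1) (by omega)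
  obtain ⟨b', hb', hpb⟩ := hN (b + 1) (by omega)
  simpa using hG.eq_of_isClosedWalk (hp.isClosedWalk ha' hpa) (hp.isClosedWalk hb' hpb)
    (by rw [← hp a, ← hp b, hab])

/-- If a finite directed multigraph has no intersecting cycles, then
every infinite path is eventually periodic. -/
theorem infPath_eventually_periodic [Fintype V] [Fintype E] (src tgt : E → V)
    (hG : NoIntersectingCycles src tgt) (p : ℕ → E) (hp : IsInfPath src tgt p) :
    ∃ (N q : ℕ), 1 ≤ q ∧ ∀ n ≥ N, p (n + q) = p n :=
  infPath_eventually_periodic_general src tgt hG p hp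
end

section
/- Let G be a finite directed multigraph and suppose two distinct simple cycles of G share a vertex v. Then the set of infinite paths p in G with src (p 0) = v has the cardinality of the continuum. -/
open Filter Topology

variable {V E : Type*}

/-!
Rotating each of the two cycles so that it starts at `v` and repeating it forever gives two
infinite paths `g ≠ h` from `v`, both periodic with the product `L` of the cycle lengths as
period. They differ because each returns to `v` exactly at multiples of its cycle's length, so
`g = h` would force the cycles to have equal length and to be rotations of each other. For every
`s : ℕ → Bool`, following `h` on the `k`-th block of length `L` when `s k` holds and `g` otherwise
is again an infinite path from `v`, as both are back at `v` at every block boundary; distinct `s`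
give distinct paths. This gives `2 ^ ℵ₀` paths, and there are at most `#(ℕ → E) = 𝔠`.
-/

open Cardinal Function

section BlockSwitch

variable {src tgt : E → V} {g h : ℕ → E} {L : ℕ}

def blockSwitch (g h : ℕ → E) (L : ℕ) (s : ℕ → Bool) (n : ℕ) : E :=
  if s (n / L) then h n else g n

lemma isInfPath_blockSwitch (hg : IsInfPath src tgt g) (hh : IsInfPath src tgt h)
    (hgL : Periodic g L) (hhL : Periodic h L) (hgh0 : src (g 0) = src (h 0)) (s : ℕ → Bool) :
    IsInfPath src tgt (blockSwitch g h L s) := by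
  intro n
  by_cases hblock : L ∣ n + 1
  · have hgn : g (n + 1) = g 0 := by rw [← hgL.map_mod_nat, Nat.mod_eq_zero_of_dvd hblock]
    have hhn : h (n + 1) = h 0 := by rw [← hhL.map_mod_nat, Nat.mod_eq_zero_of_dvd hblock]
    simp only [blockSwitch]
    split_ifs <;> simp only [hg n, hh n, hgn, hhn, hgh0]
  · have hsame : (n + 1) / L = n / L := by simp [Nat.succ_div, hblock]
    simp only [blockSwitch, hsame]
    split_ifs
    exacts [hh n, hg n]

lemma blockSwitch_injective (hL : 0 < L) (hgL : Periodic g L) (hhL : Periodic h L)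
    (hgh : g ≠ h) : Injective (blockSwitch g h L) := by
  obtain ⟨j, hj⟩ := ne_iff.mp hgh
  intro s t hst
  funext k
  have hgn : g (j % L + k * L) = g j := (hgL.nat_mul k (j % L)).trans (hgL.map_mod_nat j)
  have hhn : h (j % L + k * L) = h j := (hhL.nat_mul k (j % L)).trans (hhL.map_mod_nat j)
  have hblock : (j % L + k * L) / L = k := by
    rw [Nat.add_mul_div_right _ _ hL, Nat.div_eq_of_lt (Nat.mod_lt _ hL), zero_add]
  have hstn := congrFun hst (j % L + k * L)
  simp only [blockSwitch, hblock, hgn, hhn] at hstn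
  cases hs : s k <;> cases ht : t k <;> simp [hs, ht, hj, Ne.symm hj] at hstn ⊢

lemma continuum_le_mk_infPaths {v : V} (hL : 0 < L) (hg : IsInfPath src tgt g)
    (hh : IsInfPath src tgt h) (hgL : Periodic g L) (hhL : Periodic h L) (hg0 : src (g 0) = v)
    (hh0 : src (h 0) = v) (hgh : g ≠ h) :
    𝔠 ≤ #{p : ℕ → E // IsInfPath src tgt p ∧ src (p 0) = v} := by
  have hstart (s : ℕ → Bool) : src (blockSwitch g h L s 0) = v := by
    unfold blockSwitch
    split_ifs <;> assumption
  let embed (s : ℕ → Bool) : {p : ℕ → E // IsInfPath src tgt p ∧ src (p 0) = v} :=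
    ⟨blockSwitch g h L s, isInfPath_blockSwitch hg hh hgL hhL (hg0.trans hh0.symm) s, hstart s⟩
  have hembed : Injective embed := fun s t hst =>
    blockSwitch_injective hL hgL hhL hgh (congrArg Subtype.val hst)
  simpa using lift_mk_le_lift_mk_of_injective hembed

end BlockSwitch

lemma mk_nat_arrow_le_continuum [Countable E] : #(ℕ → E) ≤ 𝔠 :=
  calc #(ℕ → E) = #E ^ ℵ₀ := by simp
    _ ≤ 𝔠 ^ ℵ₀ := power_le_power_right (mk_le_aleph0.trans aleph0_le_continuum)
    _ = 𝔠 := continuum_power_aleph0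

section Cycles

variable {src tgt : E → V} {l : List E} {v : V}

lemma IsClosedDiPath.tgt_getElem (hc : IsClosedDiPath src tgt l) (k : ℕ) (hk : k < l.length) :
    tgt l[k] = src (l[(k + 1) % l.length]'(Nat.mod_lt _ (by omega))) := by
  obtain ⟨⟨-, hchain⟩, w, hstart, hend⟩ := hc
  rcases Nat.lt_or_ge (k + 1) l.length with hk1 | hk1
  · simpa [Nat.mod_eq_of_lt hk1] using List.isChain_iff_getElem.mp hchain k hk1
  · obtain rfl : k = l.length - 1 := by omega
    have hlen : l.length - 1 + 1 = l.length := by omega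
    obtain ⟨a, ha, rfl⟩ := by simpa [StartsAt, List.head?_eq_getElem?] using hstart
    obtain ⟨b, hb, hbw⟩ := by simpa [EndsAt, List.getLast?_eq_getElem?] using hend
    obtain ⟨_, rfl⟩ := List.getElem?_eq_some_iff.mp ha
    obtain ⟨_, rfl⟩ := List.getElem?_eq_some_iff.mp hb
    simpa [hlen] using hbw

lemma IsSimpleCycle.length_pos (hc : IsSimpleCycle src tgt l) : 0 < l.length :=
  List.length_pos_iff.mpr hc.1.1.1

def cyclicWalk (l : List E) (hl : 0 < l.length) (i n : ℕ) : E :=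
  l[(n + i) % l.length]'(Nat.mod_lt _ hl)

section CyclicWalk

variable (hl : 0 < l.length) (i : ℕ)

lemma periodic_cyclicWalk : Periodic (cyclicWalk l hl i) l.length := fun n => by
  simp [cyclicWalk, Nat.add_right_comm n l.length i]

lemma isInfPath_cyclicWalk (hc : IsClosedDiPath src tgt l) :
    IsInfPath src tgt (cyclicWalk l hl i) := fun n => by
  simp only [cyclicWalk, hc.tgt_getElem _ (Nat.mod_lt _ hl), Nat.mod_add_mod, Nat.add_right_comm]

lemma map_range_cyclicWalk : (List.range l.length).map (cyclicWalk l hl i) = l.rotate i :=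
  List.ext_getElem (by simp) fun j _ _ => by simp [cyclicWalk, List.getElem_rotate]

lemma length_dvd_of_src_cyclicWalk_eq (hnd : (l.map src).Nodup) {n : ℕ}
    (hn : src (cyclicWalk l hl i n) = src (cyclicWalk l hl i 0)) : l.length ∣ n := by
  have hmod : (n + i) % l.length = (0 + i) % l.length :=
    (hnd.getElem_inj_iff (hi := by simpa using Nat.mod_lt _ hl)
      (hj := by simpa using Nat.mod_lt _ hl)).mp (by simpa [cyclicWalk] using hn)
  exact Nat.modEq_zero_iff_dvd.mp (Nat.ModEq.add_right_cancel' i hmod)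

end CyclicWalk

lemma IsSimpleCycle.exists_periodic_infPath (hc : IsSimpleCycle src tgt l) (hv : OnCycle src l v) :
    ∃ g : ℕ → E, IsInfPath src tgt g ∧ Periodic g l.length ∧ src (g 0) = v ∧
      (∀ n, src (g n) = v → l.length ∣ n) ∧ l ~r (List.range l.length).map g := by
  obtain ⟨i, hi, hiv⟩ := List.getElem_of_mem hv
  rw [List.getElem_map] at hiv
  have hstart : src (cyclicWalk l hc.length_pos i 0) = v := by
    simpa [cyclicWalk, Nat.mod_eq_of_lt (by simpa using hi : i < l.length)] using hiv
  refine ⟨cyclicWalk l hc.length_pos i, isInfPath_cyclicWalk _ i hc.1, periodic_cyclicWalk _ i,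
    hstart, fun n hn => length_dvd_of_src_cyclicWalk_eq _ i hc.2 (hn.trans hstart.symm), ?_⟩
  rw [map_range_cyclicWalk]
  exact ⟨i, rfl⟩

lemma OnTwoCycles.exists_periodic_infPaths (hv : OnTwoCycles src tgt v) :
    ∃ (L : ℕ) (g h : ℕ → E), 0 < L ∧ IsInfPath src tgt g ∧ IsInfPath src tgt h ∧
      Periodic g L ∧ Periodic h L ∧ src (g 0) = v ∧ src (h 0) = v ∧ g ≠ h := by
  obtain ⟨l, l', hl, hl', hrot, hvl, hvl'⟩ := hv
  obtain ⟨g, hg, hgL, hg0, hgret, hlg⟩ := hl.exists_periodic_infPath hvl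
  obtain ⟨h, hh, hhL, hh0, hhret, hlh⟩ := hl'.exists_periodic_infPath hvl'
  have hgh : g ≠ h := by
    rintro rfl
    have hlen : l.length = l'.length :=
      Nat.dvd_antisymm (hgret _ (by rw [hhL.eq, hh0])) (hhret _ (by rw [hgL.eq, hg0]))
    exact hrot (hlg.trans (hlen ▸ hlh.symm))
  refine ⟨l'.length * l.length, g, h, Nat.mul_pos hl'.length_pos hl.length_pos, hg, hh,
    hgL.nat_mul _, ?_, hg0, hh0, hgh⟩
  rw [mul_comm]
  exact hhL.nat_mul _

end Cycles

theorem continuum_infPaths_of_twoCycles_general [Fintype E] (src tgt : E → V)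
    (v : V) (hv : OnTwoCycles src tgt v) :
    Cardinal.mk {p : ℕ → E // IsInfPath src tgt p ∧ src (p 0) = v} = Cardinal.continuum := by
  obtain ⟨L, g, h, hL, hg, hh, hgL, hhL, hg0, hh0, hgh⟩ := hv.exists_periodic_infPaths
  exact le_antisymm ((mk_subtype_le _).trans mk_nat_arrow_le_continuum)
    (continuum_le_mk_infPaths hL hg hh hgL hhL hg0 hh0 hgh)

/-- If two distinct simple cycles share a vertex `v`, then the set of
infinite paths starting at `v` has the cardinality of the continuum. -/
theorem continuum_infPaths_of_twoCycles [Fintype V] [Fintype E] (src tgt : E → V)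
    (v : V) (hv : OnTwoCycles src tgt v) :
    Cardinal.mk {p : ℕ → E // IsInfPath src tgt p ∧ src (p 0) = v} = Cardinal.continuum :=
  continuum_infPaths_of_twoCycles_general src tgt v hv
end
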